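/- Let G be a BWR-game and Ĝ the BW-game obtained from G by replacing each random position v ∈ V_R with a deterministic position whose only arc is a self-loop with local reward μ_G(v). Then μ_{Ĝ}(v) = μ_G(v) for every position v. -/

import Mathlib

open Matrix Filter

/-- A BWR-game: finite digraph with no sinks, positions partitioned into
White (`player v = 0`), Black (`player v = 1`) and Random (`player v = 2`),
positive transition probabilities on arcs out of random positions summing to 1,
and local rewards on arcs. -/
structure BWR (V : Type) [Fintype V] [DecidableEq V] where
  succ : V → Finset V
  succ_nonempty : ∀ v, (succ v).Nonempty
  player : V → Fin 3
  p : V → V → ℝ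
  p_mem : ∀ v u, player v = 2 → (u ∈ succ v ↔ 0 < p v u)
  p_zero : ∀ v u, player v = 2 → u ∉ succ v → p v u = 0
  p_sum : ∀ v, player v = 2 → ∑ u ∈ succ v, p v u = 1
  r : V → V → ℝ

namespace BWR

variable {V : Type} [Fintype V] [DecidableEq V] (G : BWR V)

/-- A (pure stationary) situation is valid if it moves along arcs. -/
def Valid (s : V → V) : Prop := ∀ v, s v ∈ G.succ v

/-- Combine a White strategy and a Black strategy into one situation. -/
def combine (sW sB : V → V) : V → V := fun v => if G.player v = 0 then sW v else sB v

/-- Transition matrix of the Markov chain obtained by fixing situation `s`. -/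
noncomputable def P (s : V → V) : Matrix V V ℝ :=
  Matrix.of fun v u => if G.player v = 2 then G.p v u else if s v = u then 1 else 0

/-- Expected one-step reward under situation `s`. -/
noncomputable def rbar (s : V → V) : V → ℝ :=
  fun v => if G.player v = 2 then ∑ u ∈ G.succ v, G.p v u * G.r v u else G.r v (s v)

/-- Limiting mean payoff from initial position `v` under situation `s`. -/
noncomputable def payoff (s : V → V) (v : V) : ℝ :=
  Filter.liminf
    (fun T : ℕ => (∑ t ∈ Finset.range (T + 1), (G.P s ^ t).mulVec (G.rbar s)) v / (T + 1))
    Filter.atTop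

/-- `μ` is the value function of the game: some saddle point in pure stationary
strategies realizes it uniformly. -/
def IsValue (μ : V → ℝ) : Prop :=
  ∃ sW sB : V → V, G.Valid (G.combine sW sB) ∧
    (∀ v, μ v = G.payoff (G.combine sW sB) v) ∧
    (∀ sW' : V → V, G.Valid (G.combine sW' sB) → ∀ v, G.payoff (G.combine sW' sB) v ≤ μ v) ∧
    (∀ sB' : V → V, G.Valid (G.combine sW sB') → ∀ v, μ v ≤ G.payoff (G.combine sW sB') v)

/-- The local value `M̄[r](v)`. -/
noncomputable def mbar : V → ℝ := fun v =>
  if G.player v = 0 then (G.succ v).sup' (G.succ_nonempty v) (fun u => G.r v u)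
  else if G.player v = 1 then (G.succ v).inf' (G.succ_nonempty v) (fun u => G.r v u)
  else ∑ u ∈ G.succ v, G.p v u * G.r v u

/-- A locally optimal situation achieves the local value at every controlled position. -/
def LocallyOptimal (s : V → V) : Prop :=
  G.Valid s ∧ ∀ v, G.player v ≠ 2 → G.r v (s v) = G.mbar v

end BWR

/-- The BW-game `Ĝ` obtained from `G` by replacing each random position by a
deterministic (Black, arbitrarily) position whose only move is a self-loop
carrying local reward `μ v`. -/
noncomputable def hatGame {V : Type} [Fintype V] [DecidableEq V]
    (G : BWR V) (μ : V → ℝ) : BWR V where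
  succ := fun v => if G.player v = 2 then {v} else G.succ v
  succ_nonempty := fun v => by
    by_cases h : G.player v = 2 <;> simp [h, G.succ_nonempty v]
  player := fun v => if G.player v = 2 then 1 else G.player v
  p := fun _ _ => 0
  p_mem := fun v u h => by
    by_cases h2 : G.player v = 2 <;> simp_all
  p_zero := fun v u h _ => rfl
  p_sum := fun v h => by
    by_cases h2 : G.player v = 2 <;> simp_all
  r := fun v u => if G.player v = 2 then μ v else G.r v u

/-!
Let `(sW, sB)` be a saddle point of `G`. The payoff of a situation is `Q r̄`, where `Q` is the
Cesàro limit of the powers of its transition matrix, so `μ` is harmonic: `μ (s x) = μ x` at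
deterministic positions. A one-step deviation argument with the stationary distributions of the
deviated chain shows that `μ` cannot increase along White's arcs nor decrease along Black's.
In `Ĝ` every play is deterministic: it is either absorbed in a former random position `y`, where
it earns `μ y` forever, or it never meets one and is then a play of `G`. Hence `sW`, together with
`sB` modified to loop at the former random positions, is a saddle point of `Ĝ` with value `μ`.
-/

open Finset Topology

section CesaroMean

variable {V : Type} [Fintype V] [DecidableEq V]

attribute [local instance] Matrix.normedAddCommGroup Matrix.normedSpace

noncomputable def cesaroMean (P : Matrix V V ℝ) (T : ℕ) : Matrix V V ℝ :=
  ((T : ℝ) + 1)⁻¹ • ∑ t ∈ range (T + 1), P ^ t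

noncomputable def meanPayoff (P : Matrix V V ℝ) (r : V → ℝ) (v : V) : ℝ :=
  liminf (fun T : ℕ => (∑ t ∈ range (T + 1), (P ^ t) *ᵥ r) v / (T + 1)) atTop

theorem isCompact_rowStochastic : IsCompact (rowStochastic ℝ V : Set (Matrix V V ℝ)) := by
  have hclosed : IsClosed (rowStochastic ℝ V : Set (Matrix V V ℝ)) := by
    refine IsClosed.inter ?_ (isClosed_eq (continuous_id.matrix_mulVec continuous_const)
      continuous_const)
    show IsClosed {M : Matrix V V ℝ | ∀ i j, 0 ≤ M i j}
    simp only [Set.ofPred_forall]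
    exact isClosed_iInter fun i => isClosed_iInter fun j =>
      isClosed_le continuous_const ((continuous_apply j).comp (continuous_apply i))
  have hbox : IsCompact (Set.univ.pi fun _ : V => Set.univ.pi fun _ : V => Set.Icc (0 : ℝ) 1) :=
    isCompact_univ_pi fun _ => isCompact_univ_pi fun _ => isCompact_Icc
  refine hbox.of_isClosed_subset hclosed fun M hM => ?_
  exact Set.mem_univ_pi.2 fun i => Set.mem_univ_pi.2 fun j =>
    ⟨nonneg_of_mem_rowStochastic hM, le_one_of_mem_rowStochastic hM⟩

theorem cesaroMean_mem_rowStochastic {P : Matrix V V ℝ} (hP : P ∈ rowStochastic ℝ V) (T : ℕ) :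
    cesaroMean P T ∈ rowStochastic ℝ V := by
  rw [cesaroMean, smul_sum]
  refine convex_rowStochastic.sum_mem (fun _ _ => by positivity) ?_ fun t _ => pow_mem hP t
  rw [sum_const, card_range, nsmul_eq_mul, Nat.cast_add_one, mul_inv_cancel₀ (by positivity)]

theorem cesaroMean_mul_sub_one (P : Matrix V V ℝ) (T : ℕ) :
    cesaroMean P T * (P - 1) = ((T : ℝ) + 1)⁻¹ • (P ^ (T + 1) - 1) := by
  rw [cesaroMean, smul_mul_assoc, geom_sum_mul]

theorem sub_one_mul_cesaroMean (P : Matrix V V ℝ) (T : ℕ) :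
    (P - 1) * cesaroMean P T = ((T : ℝ) + 1)⁻¹ • (P ^ (T + 1) - 1) := by
  rw [cesaroMean, mul_smul_comm, mul_geom_sum]

theorem tendsto_inv_smul_pow_sub_one {P : Matrix V V ℝ} (hP : P ∈ rowStochastic ℝ V) :
    Tendsto (fun T : ℕ => ((T : ℝ) + 1)⁻¹ • (P ^ (T + 1) - 1)) atTop (𝓝 0) := by
  obtain ⟨C, hC⟩ := (isCompact_rowStochastic (V := V)).isBounded.exists_norm_le
  refine (tendsto_one_div_add_atTop_nhds_zero_nat.congr fun T => one_div _)
    |>.zero_smul_isBoundedUnder_le (isBoundedUnder_of ⟨C + C, fun T => ?_⟩)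
  exact (norm_sub_le _ _).trans (add_le_add (hC _ (pow_mem hP _)) (hC _ (one_mem _)))

theorem mul_cesaroMean_of_mul_eq {P Q : Matrix V V ℝ} (h : Q * P = Q) (T : ℕ) :
    Q * cesaroMean P T = Q := by
  have hpow (t : ℕ) : Q * P ^ t = Q := by
    induction t with
    | zero => simp
    | succ t ih => rw [pow_succ, ← mul_assoc, ih, h]
  simp only [cesaroMean, mul_smul_comm, mul_sum, hpow, sum_const, card_range,
    ← Nat.cast_smul_eq_nsmul ℝ, smul_smul]
  rw [Nat.cast_add_one, inv_mul_cancel₀ (by positivity), one_smul]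

theorem cesaroMean_mul_of_mul_eq {P Q : Matrix V V ℝ} (h : P * Q = Q) (T : ℕ) :
    cesaroMean P T * Q = Q := by
  have hpow (t : ℕ) : P ^ t * Q = Q := by
    induction t with
    | zero => simp
    | succ t ih => rw [pow_succ', mul_assoc, ih, h]
  simp only [cesaroMean, smul_mul_assoc, sum_mul, hpow, sum_const, card_range,
    ← Nat.cast_smul_eq_nsmul ℝ, smul_smul]
  rw [Nat.cast_add_one, inv_mul_cancel₀ (by positivity), one_smul]

end CesaroMean

theorem MapClusterPt.eq_of_tendsto_comp {X Y ι : Type*} [TopologicalSpace X]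
    [TopologicalSpace Y] [T2Space Y] {l : Filter ι} {u : ι → X} {x : X} {f : X → Y} {y : Y}
    (hx : MapClusterPt x l u) (hf : Continuous f) (hfu : Tendsto (f ∘ u) l (𝓝 y)) :
    f x = y := by
  by_contra hne
  exact (hx.continuousAt_comp hf.continuousAt).neBot.ne
    ((disjoint_nhds_nhds.2 hne).mono_right hfu).eq_bot

theorem Filter.Tendsto.cesaro_succ {u : ℕ → ℝ} {c : ℝ} (h : Tendsto u atTop (𝓝 c)) :
    Tendsto (fun T : ℕ => (∑ k ∈ range (T + 1), u k) / (T + 1)) atTop (𝓝 c) := by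
  refine (h.cesaro.comp (tendsto_add_atTop_nat 1)).congr fun T => ?_
  simp [div_eq_inv_mul]

section MeanPayoff

variable {V : Type} [Fintype V]

theorem mulVec_eq_of_col_eq_zero {Q : Matrix V V ℝ} {v : V} (hQ : ∀ w, Q w v = 0)
    {f g : V → ℝ} (h : ∀ x, x ≠ v → f x = g x) : Q *ᵥ f = Q *ᵥ g := by
  funext w
  refine sum_congr rfl fun x _ => ?_
  rcases eq_or_ne x v with rfl | hx
  · simp [hQ]
  · rw [h x hx]

variable [DecidableEq V]

theorem MapClusterPt.mul_eq_of_cesaroMean {P Q : Matrix V V ℝ} (hP : P ∈ rowStochastic ℝ V)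
    (hQ : MapClusterPt Q atTop (cesaroMean P)) : Q * P = Q ∧ P * Q = Q := by
  have hright : Q * (P - 1) = 0 :=
    hQ.eq_of_tendsto_comp (continuous_id.matrix_mul continuous_const) <| by
      simpa only [Function.comp_def, id_eq, cesaroMean_mul_sub_one]
        using tendsto_inv_smul_pow_sub_one hP
  have hleft : (P - 1) * Q = 0 :=
    hQ.eq_of_tendsto_comp (continuous_const.matrix_mul continuous_id) <| by
      simpa only [Function.comp_def, id_eq, sub_one_mul_cesaroMean]
        using tendsto_inv_smul_pow_sub_one hP
  rw [mul_sub, mul_one, sub_eq_zero] at hright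
  rw [sub_mul, one_mul, sub_eq_zero] at hleft
  exact ⟨hright, hleft⟩

theorem exists_tendsto_cesaroMean {P : Matrix V V ℝ} (hP : P ∈ rowStochastic ℝ V) :
    ∃ Q ∈ rowStochastic ℝ V, Tendsto (cesaroMean P) atTop (𝓝 Q) ∧ Q * P = Q ∧ P * Q = Q := by
  have hmem : ∀ T, cesaroMean P T ∈ (rowStochastic ℝ V : Set (Matrix V V ℝ)) :=
    cesaroMean_mem_rowStochastic hP
  obtain ⟨Q, hQmem, hQ⟩ := isCompact_rowStochastic.exists_mapClusterPt
    (f := atTop) (tendsto_principal.2 (Eventually.of_forall hmem))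
  obtain ⟨hQP, hPQ⟩ := hQ.mul_eq_of_cesaroMean hP
  refine ⟨Q, hQmem, isCompact_rowStochastic.tendsto_nhds_of_unique_mapClusterPt
    (Eventually.of_forall hmem) fun Q' _ hQ' => ?_, hQP, hPQ⟩
  have h₁ : Q * Q' = Q := hQ'.eq_of_tendsto_comp (continuous_const.matrix_mul continuous_id) <| by
    simpa only [Function.comp_def, id_eq, mul_cesaroMean_of_mul_eq hQP] using tendsto_const_nhds
  have h₂ : Q * Q' = Q' := hQ.eq_of_tendsto_comp (continuous_id.matrix_mul continuous_const) <| by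
    simpa only [Function.comp_def, id_eq, cesaroMean_mul_of_mul_eq (hQ'.mul_eq_of_cesaroMean hP).2]
      using tendsto_const_nhds
  rw [← h₂, h₁]

theorem cesaroMean_mulVec (P : Matrix V V ℝ) (T : ℕ) (f : V → ℝ) :
    cesaroMean P T *ᵥ f = ((T : ℝ) + 1)⁻¹ • ∑ t ∈ range (T + 1), P ^ t *ᵥ f := by
  rw [cesaroMean, smul_mulVec, sum_mulVec]

theorem Filter.Tendsto.cesaroMean_mulVec {P Q : Matrix V V ℝ}
    (hQ : Tendsto (cesaroMean P) atTop (𝓝 Q)) (f : V → ℝ) :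
    Tendsto (fun T => cesaroMean P T *ᵥ f) atTop (𝓝 (Q *ᵥ f)) :=
  ((continuous_id.matrix_mulVec continuous_const).tendsto Q).comp hQ

theorem meanPayoff_eq_mulVec {P Q : Matrix V V ℝ} (hQ : Tendsto (cesaroMean P) atTop (𝓝 Q))
    (r : V → ℝ) : meanPayoff P r = Q *ᵥ r := by
  funext v
  refine Tendsto.liminf_eq ?_
  convert tendsto_pi_nhds.1 (hQ.cesaroMean_mulVec r) v using 2 with T
  rw [cesaroMean_mulVec, Pi.smul_apply, smul_eq_mul, div_eq_inv_mul]

theorem mulVec_meanPayoff {P : Matrix V V ℝ} (hP : P ∈ rowStochastic ℝ V) (r : V → ℝ) :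
    P *ᵥ meanPayoff P r = meanPayoff P r := by
  obtain ⟨Q, -, hQ, -, hPQ⟩ := exists_tendsto_cesaroMean hP
  rw [meanPayoff_eq_mulVec hQ, mulVec_mulVec, hPQ]

theorem meanPayoff_neg {P : Matrix V V ℝ} (hP : P ∈ rowStochastic ℝ V) (r : V → ℝ) :
    meanPayoff P (-r) = -meanPayoff P r := by
  obtain ⟨Q, -, hQ, -⟩ := exists_tendsto_cesaroMean hP
  rw [meanPayoff_eq_mulVec hQ, meanPayoff_eq_mulVec hQ, mulVec_neg]

theorem mulVec_mono_of_mem_rowStochastic {M : Matrix V V ℝ} (hM : M ∈ rowStochastic ℝ V)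
    {f g : V → ℝ} (h : f ≤ g) : M *ᵥ f ≤ M *ᵥ g := by
  have := nonneg_mulVec_of_mem_rowStochastic hM (x := g - f) fun i => sub_nonneg.2 (h i)
  exact fun j => by simpa only [mulVec_sub, Pi.sub_apply, sub_nonneg] using this j

theorem le_mulVec_of_le_mulVec {P Q : Matrix V V ℝ} (hP : P ∈ rowStochastic ℝ V)
    (hQ : Tendsto (cesaroMean P) atTop (𝓝 Q)) {f : V → ℝ} (hf : f ≤ P *ᵥ f) : f ≤ Q *ᵥ f := by
  have hpow (t : ℕ) : f ≤ P ^ t *ᵥ f := by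
    induction t with
    | zero => simp
    | succ t ih =>
      rw [pow_succ, ← mulVec_mulVec]
      exact ih.trans (mulVec_mono_of_mem_rowStochastic (pow_mem hP t) hf)
  refine ge_of_tendsto' (hQ.cesaroMean_mulVec f) fun T => ?_
  calc f = ((T : ℝ) + 1)⁻¹ • ∑ _t ∈ range (T + 1), f := by
        rw [sum_const, card_range, ← Nat.cast_smul_eq_nsmul ℝ, smul_smul, Nat.cast_add_one,
          inv_mul_cancel₀ (by positivity), one_smul]
    _ ≤ cesaroMean P T *ᵥ f := by
        rw [cesaroMean_mulVec]
        exact smul_le_smul_of_nonneg_left (sum_le_sum fun t _ => hpow t) (by positivity)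

theorem col_eq_zero_of_le_mulVec {P Q : Matrix V V ℝ} (hQ : Q ∈ rowStochastic ℝ V)
    (hQP : Q * P = Q) {f : V → ℝ} (hf : f ≤ P *ᵥ f) {v : V} (hv : f v < (P *ᵥ f) v) (w : V) :
    Q w v = 0 := by
  have hzero : ∑ x, Q w x * ((P *ᵥ f) x - f x) = 0 := by
    have := congrFun (congrArg (· *ᵥ f) hQP) w
    simp only [← mulVec_mulVec] at this
    simp only [mul_sub, sum_sub_distrib]
    exact sub_eq_zero.2 this
  have := (sum_eq_zero_iff_of_nonneg fun x _ => mul_nonneg (nonneg_of_mem_rowStochastic hQ)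
    (sub_nonneg.2 (hf x))).1 hzero v (mem_univ v)
  exact (mul_eq_zero.1 this).resolve_right (sub_pos.2 hv).ne'

/-- If `μ v < (P' μ) v`, then `μ` is `P'`-subharmonic, strictly at `v`, so the stationary
distributions `Q'` of `P'` vanish at `v`. The long-run behaviour of `P'` is then that of `P`,
which gives `meanPayoff P' r' = Q' μ ≥ μ`, hence `= μ`; but `meanPayoff P' r'` is
`P'`-harmonic while `μ` is not. -/
theorem mulVec_meanPayoff_le_of_deviation {P P' : Matrix V V ℝ} (hP : P ∈ rowStochastic ℝ V)
    (hP' : P' ∈ rowStochastic ℝ V) {r r' : V → ℝ} {v : V} (hrow : ∀ x, x ≠ v → P' x = P x)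
    (hr : ∀ x, x ≠ v → r' x = r x) (hle : meanPayoff P' r' ≤ meanPayoff P r) :
    (P' *ᵥ meanPayoff P r) v ≤ meanPayoff P r v := by
  obtain ⟨Q, -, hQ, -, hPQ⟩ := exists_tendsto_cesaroMean hP
  obtain ⟨Q', hQ'mem, hQ', hQ'P', hP'Q'⟩ := exists_tendsto_cesaroMean hP'
  set μ := meanPayoff P r
  have hμ : μ = Q *ᵥ r := meanPayoff_eq_mulVec hQ r
  by_contra! hv
  have hsub : μ ≤ P' *ᵥ μ := by
    intro x
    rcases eq_or_ne x v with rfl | hx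
    · exact hv.le
    · change μ x ≤ P' x ⬝ᵥ μ
      rw [hrow x hx]
      exact (congrFun (mulVec_meanPayoff hP r) x).ge
  have hcol := col_eq_zero_of_le_mulVec hQ'mem hQ'P' hsub hv
  have hQ'P : Q' * P = Q' := by
    ext w z
    have := congrFun (mulVec_eq_of_col_eq_zero hcol (f := fun x => P x z) (g := fun x => P' x z)
      fun x hx => by rw [hrow x hx]) w
    conv_rhs => rw [← hQ'P']
    simpa only [mul_apply, mulVec, dotProduct] using this
  have hQ'Q : Q' * Q = Q' := tendsto_nhds_unique
    (((continuous_const.matrix_mul continuous_id).tendsto Q).comp hQ)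
    (by simpa only [Function.comp_def, id_eq, mul_cesaroMean_of_mul_eq hQ'P]
      using tendsto_const_nhds)
  have hμ' : meanPayoff P' r' = μ := by
    refine le_antisymm hle ?_
    calc μ ≤ Q' *ᵥ μ := le_mulVec_of_le_mulVec hP' hQ' hsub
      _ = meanPayoff P' r' := by
        rw [meanPayoff_eq_mulVec hQ', hμ, mulVec_mulVec, hQ'Q,
          mulVec_eq_of_col_eq_zero hcol fun x hx => (hr x hx).symm]
  have := congrFun (mulVec_meanPayoff hP' r') v
  rw [hμ'] at this
  exact hv.ne' this

theorem le_mulVec_meanPayoff_of_deviation {P P' : Matrix V V ℝ} (hP : P ∈ rowStochastic ℝ V)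
    (hP' : P' ∈ rowStochastic ℝ V) {r r' : V → ℝ} {v : V} (hrow : ∀ x, x ≠ v → P' x = P x)
    (hr : ∀ x, x ≠ v → r' x = r x) (hle : meanPayoff P r ≤ meanPayoff P' r') :
    meanPayoff P r v ≤ (P' *ᵥ meanPayoff P r) v := by
  have := mulVec_meanPayoff_le_of_deviation hP hP' (r := -r) (r' := -r') hrow
    (fun x hx => by simp [hr x hx]) (by simpa [meanPayoff_neg hP, meanPayoff_neg hP'] using hle)
  simpa [meanPayoff_neg hP, mulVec_neg] using this

theorem pow_mulVec_apply_of_orbit {P : Matrix V V ℝ} {f : V → V} {v : V}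
    (h : ∀ k (g : V → ℝ), (P *ᵥ g) (f^[k] v) = g (f (f^[k] v))) (k : ℕ) (g : V → ℝ) :
    (P ^ k *ᵥ g) v = g (f^[k] v) := by
  induction k generalizing g with
  | zero => simp
  | succ k ih => rw [pow_succ, ← mulVec_mulVec, ih, h, Function.iterate_succ_apply']

theorem meanPayoff_eq_of_orbit {P : Matrix V V ℝ} {f : V → V} {v : V}
    (h : ∀ k (g : V → ℝ), (P *ᵥ g) (f^[k] v) = g (f (f^[k] v))) (r : V → ℝ) :
    meanPayoff P r v =
      liminf (fun T : ℕ => (∑ k ∈ range (T + 1), r (f^[k] v)) / (T + 1)) atTop := by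
  simp only [meanPayoff, Finset.sum_apply, pow_mulVec_apply_of_orbit h]

end MeanPayoff

namespace BWR

variable {V : Type} [Fintype V] [DecidableEq V] (G : BWR V)

theorem payoff_eq_meanPayoff (s : V → V) : G.payoff s = meanPayoff (G.P s) (G.rbar s) := rfl

theorem P_mem_rowStochastic (s : V → V) : G.P s ∈ rowStochastic ℝ V := by
  refine mem_rowStochastic_iff_sum.2 ⟨fun x y => ?_, fun x => ?_⟩ <;>
    by_cases h : G.player x = 2 <;> simp only [P, of_apply, h, if_true, if_false]
  · by_cases hy : y ∈ G.succ x
    · exact ((G.p_mem x y h).1 hy).le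
    · exact (G.p_zero x y h hy).ge
  · split_ifs <;> norm_num
  · rw [← G.p_sum x h]
    exact (sum_subset (subset_univ _) fun y _ hy => G.p_zero x y h hy).symm
  · simp

theorem P_mulVec_apply_of_ne {s : V → V} {x : V} (hx : G.player x ≠ 2) (g : V → ℝ) :
    (G.P s *ᵥ g) x = g (s x) := by
  simp [P, hx, mulVec, dotProduct]

theorem payoff_apply_of_ne (s : V → V) {x : V} (hx : G.player x ≠ 2) :
    G.payoff s (s x) = G.payoff s x := by
  have := congrFun (mulVec_meanPayoff (G.P_mem_rowStochastic s) (G.rbar s)) x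
  rwa [P_mulVec_apply_of_ne _ hx] at this

theorem payoff_le_of_update_le {s : V → V} {v u : V} (hv : G.player v ≠ 2)
    (hle : G.payoff (Function.update s v u) ≤ G.payoff s) : G.payoff s u ≤ G.payoff s v := by
  have := mulVec_meanPayoff_le_of_deviation (G.P_mem_rowStochastic s)
    (G.P_mem_rowStochastic _) (v := v) (fun x hx => by funext y; simp [P, hx])
    (fun x hx => by simp [rbar, hx]) hle
  rwa [P_mulVec_apply_of_ne _ hv, Function.update_self] at this

theorem le_payoff_of_le_update {s : V → V} {v u : V} (hv : G.player v ≠ 2)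
    (hle : G.payoff s ≤ G.payoff (Function.update s v u)) : G.payoff s v ≤ G.payoff s u := by
  have := le_mulVec_meanPayoff_of_deviation (G.P_mem_rowStochastic s)
    (G.P_mem_rowStochastic _) (v := v) (fun x hx => by funext y; simp [P, hx])
    (fun x hx => by simp [rbar, hx]) hle
  rwa [P_mulVec_apply_of_ne _ hv, Function.update_self] at this

theorem valid_update {s : V → V} (hs : G.Valid s) {v u : V} (hu : u ∈ G.succ v) :
    G.Valid (Function.update s v u) := by
  intro x
  rcases eq_or_ne x v with rfl | hx
  · simpa using hu
  · simpa [hx] using hs x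

theorem combine_update_left {sW sB : V → V} {v : V} (hv : G.player v = 0) (u : V) :
    G.combine (Function.update sW v u) sB = Function.update (G.combine sW sB) v u := by
  funext x
  rcases eq_or_ne x v with rfl | hx <;> simp [combine, *]

theorem combine_update_right {sW sB : V → V} {v : V} (hv : G.player v ≠ 0) (u : V) :
    G.combine sW (Function.update sB v u) = Function.update (G.combine sW sB) v u := by
  funext x
  rcases eq_or_ne x v with rfl | hx <;> simp [combine, *]

def IsSaddlePoint (sW sB : V → V) : Prop :=
  G.Valid (G.combine sW sB) ∧
    (∀ sW', G.Valid (G.combine sW' sB) →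
      G.payoff (G.combine sW' sB) ≤ G.payoff (G.combine sW sB)) ∧
    ∀ sB', G.Valid (G.combine sW sB') →
      G.payoff (G.combine sW sB) ≤ G.payoff (G.combine sW sB')

theorem IsValue.exists_isSaddlePoint {μ : V → ℝ} (h : G.IsValue μ) :
    ∃ sW sB, G.IsSaddlePoint sW sB ∧ G.payoff (G.combine sW sB) = μ := by
  obtain ⟨sW, sB, hvalid, hval, hW, hB⟩ := h
  obtain rfl : μ = G.payoff (G.combine sW sB) := funext hval
  exact ⟨sW, sB, ⟨hvalid, fun sW' h => hW sW' h, fun sB' h => hB sB' h⟩, rfl⟩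

theorem isValue_of_forall_le {μ : V → ℝ} {sW sB : V → V} (hvalid : G.Valid (G.combine sW sB))
    (hW : ∀ sW', G.Valid (G.combine sW' sB) → G.payoff (G.combine sW' sB) ≤ μ)
    (hB : ∀ sB', G.Valid (G.combine sW sB') → μ ≤ G.payoff (G.combine sW sB')) :
    G.IsValue μ :=
  ⟨sW, sB, hvalid, fun v => le_antisymm (hB sB hvalid v) (hW sW hvalid v),
    fun sW' h => hW sW' h, fun sB' h => hB sB' h⟩

def loopAtRandom (s : V → V) : V → V := fun x => if G.player x = 2 then x else s x

namespace IsSaddlePoint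

variable {G} {sW sB : V → V}

theorem payoff_le_of_player_eq_zero (h : G.IsSaddlePoint sW sB) {v u : V}
    (hv : G.player v = 0) (hu : u ∈ G.succ v) :
    G.payoff (G.combine sW sB) u ≤ G.payoff (G.combine sW sB) v := by
  refine G.payoff_le_of_update_le (by simp [hv]) ?_
  rw [← G.combine_update_left hv]
  exact h.2.1 _ (G.combine_update_left hv u ▸ G.valid_update h.1 hu)

theorem le_payoff_of_player_eq_one (h : G.IsSaddlePoint sW sB) {v u : V}
    (hv : G.player v = 1) (hu : u ∈ G.succ v) :
    G.payoff (G.combine sW sB) v ≤ G.payoff (G.combine sW sB) u := by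
  have hv0 : G.player v ≠ 0 := by simp [hv]
  refine G.le_payoff_of_le_update (by simp [hv]) ?_
  rw [← G.combine_update_right hv0]
  exact h.2.2 _ (G.combine_update_right hv0 u ▸ G.valid_update h.1 hu)

end IsSaddlePoint

end BWR

section HatGame

variable {V : Type} [Fintype V] [DecidableEq V] (G : BWR V) (μ : V → ℝ)

theorem hatGame_player_ne_two (x : V) : (hatGame G μ).player x ≠ 2 := by
  by_cases h : G.player x = 2 <;> simp [hatGame, h]

theorem hatGame_combine : (hatGame G μ).combine = G.combine := by
  funext sW sB x
  by_cases h : G.player x = 2 <;> simp [BWR.combine, hatGame, h]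

theorem hatGame_valid_iff {t : V → V} : (hatGame G μ).Valid t ↔
    ∀ x, (G.player x = 2 → t x = x) ∧ (G.player x ≠ 2 → t x ∈ G.succ x) := by
  refine forall_congr' fun x => ?_
  by_cases h : G.player x = 2 <;> simp [hatGame, h]

theorem hatGame_payoff_cases {t s : V → V} (ht : ∀ x, G.player x = 2 → t x = x)
    (hst : ∀ x, G.player x ≠ 2 → s x = t x) (v : V) :
    (∃ k, (hatGame G μ).payoff t v = μ (t^[k] v)) ∨
      (hatGame G μ).payoff t v = G.payoff s v := by
  have hĜ := meanPayoff_eq_of_orbit (f := t) (v := v)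
    (fun k g => (hatGame G μ).P_mulVec_apply_of_ne (hatGame_player_ne_two G μ _) g)
    ((hatGame G μ).rbar t)
  rw [← BWR.payoff_eq_meanPayoff] at hĜ
  by_cases hhit : ∃ k, G.player (t^[k] v) = 2
  · obtain ⟨k, hk⟩ := hhit
    refine .inl ⟨k, hĜ.trans (Tendsto.cesaro_succ (tendsto_const_nhds.congr' ?_)).liminf_eq⟩
    filter_upwards [eventually_ge_atTop k] with j hj
    obtain ⟨d, rfl⟩ := Nat.exists_eq_add_of_le hj
    rw [add_comm, Function.iterate_add_apply, Function.iterate_fixed (ht _ hk)]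
    simp [BWR.rbar, hatGame, hk]
  · simp only [not_exists] at hhit
    refine .inr (hĜ.trans ?_)
    rw [BWR.payoff_eq_meanPayoff, meanPayoff_eq_of_orbit (f := t)
      (fun k g => by rw [G.P_mulVec_apply_of_ne (hhit k), hst _ (hhit k)])]
    congr! 4 with T k
    simp [BWR.rbar, hatGame, hhit k, hst _ (hhit k)]

theorem hatGame_payoff_le {t s : V → V} (ht : ∀ x, G.player x = 2 → t x = x)
    (hst : ∀ x, G.player x ≠ 2 → s x = t x) (hμ : ∀ x, μ (t x) ≤ μ x) {v : V}
    (hs : G.payoff s v ≤ μ v) : (hatGame G μ).payoff t v ≤ μ v := by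
  rcases hatGame_payoff_cases G μ ht hst v with ⟨k, hk⟩ | hk
  · rw [hk]
    exact antitone_nat_of_succ_le (f := fun k => μ (t^[k] v))
      (fun k => by simpa only [Function.iterate_succ_apply'] using hμ _) (Nat.zero_le k)
  · exact hk ▸ hs

theorem le_hatGame_payoff {t s : V → V} (ht : ∀ x, G.player x = 2 → t x = x)
    (hst : ∀ x, G.player x ≠ 2 → s x = t x) (hμ : ∀ x, μ x ≤ μ (t x)) {v : V}
    (hs : μ v ≤ G.payoff s v) : μ v ≤ (hatGame G μ).payoff t v := by
  rcases hatGame_payoff_cases G μ ht hst v with ⟨k, hk⟩ | hk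
  · rw [hk]
    exact monotone_nat_of_le_succ (f := fun k => μ (t^[k] v))
      (fun k => by simpa only [Function.iterate_succ_apply'] using hμ _) (Nat.zero_le k)
  · exact hk ▸ hs

end HatGame

namespace BWR.IsSaddlePoint

variable {V : Type} [Fintype V] [DecidableEq V] {G : BWR V} {sW sB : V → V}

theorem hatGame_payoff_le (h : G.IsSaddlePoint sW sB) {sW' : V → V}
    (ht : (hatGame G (G.payoff (G.combine sW sB))).Valid (G.combine sW' (G.loopAtRandom sB))) :
    (hatGame G (G.payoff (G.combine sW sB))).payoff (G.combine sW' (G.loopAtRandom sB)) ≤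
      G.payoff (G.combine sW sB) := by
  rw [hatGame_valid_iff] at ht
  have hvalid : G.Valid (G.combine sW' sB) := fun x => by
    by_cases h0 : G.player x = 0
    · simpa [combine, h0] using (ht x).2 (by simp [h0])
    · simpa [combine, h0] using h.1 x
  intro v
  refine _root_.hatGame_payoff_le G _ (fun x hx => (ht x).1 hx)
    (fun x hx => by simp [combine, loopAtRandom, hx]) (fun x => ?_) (h.2.1 sW' hvalid v)
  obtain h0 | h1 | h2 : G.player x = 0 ∨ G.player x = 1 ∨ G.player x = 2 := by omega
  · exact h.payoff_le_of_player_eq_zero h0 ((ht x).2 (by simp [h0]))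
  · have := G.payoff_apply_of_ne (G.combine sW sB) (x := x) (by simp [h1])
    simp_all [combine, loopAtRandom]
  · simp [(ht x).1 h2]

theorem le_hatGame_payoff (h : G.IsSaddlePoint sW sB) {sB' : V → V}
    (ht : (hatGame G (G.payoff (G.combine sW sB))).Valid (G.combine sW sB')) :
    G.payoff (G.combine sW sB) ≤
      (hatGame G (G.payoff (G.combine sW sB))).payoff (G.combine sW sB') := by
  rw [hatGame_valid_iff] at ht
  have hvalid : G.Valid (G.combine sW fun x => if G.player x = 2 then sB x else sB' x) :=
    fun x => by
      by_cases h2 : G.player x = 2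
      · simpa [combine, h2] using h.1 x
      · simpa [combine, h2] using (ht x).2 h2
  intro v
  refine _root_.le_hatGame_payoff G _ (fun x hx => (ht x).1 hx)
    (fun x hx => by simp [combine, hx]) (fun x => ?_) (h.2.2 _ hvalid v)
  obtain h0 | h1 | h2 : G.player x = 0 ∨ G.player x = 1 ∨ G.player x = 2 := by omega
  · have := G.payoff_apply_of_ne (G.combine sW sB) (x := x) (by simp [h0])
    simp_all [combine]
  · exact h.le_payoff_of_player_eq_one h1 ((ht x).2 (by simp [h1]))
  · simp [(ht x).1 h2]

end BWR.IsSaddlePoint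

/-- If `μ` is the value function of the BWR-game `G`, then `μ` is
also the value function of the BW-game `Ĝ` obtained by replacing every random
position `v` with a deterministic self-loop of local reward `μ v`. -/
theorem hatGame_value
    {V : Type} [Fintype V] [DecidableEq V] (G : BWR V)
    (μ : V → ℝ) (hμ : G.IsValue μ) :
    (hatGame G μ).IsValue μ := by
  obtain ⟨sW, sB, h, rfl⟩ := hμ.exists_isSaddlePoint
  refine (hatGame G _).isValue_of_forall_le (sW := sW) (sB := G.loopAtRandom sB) ?_
    (fun sW' ht => ?_) (fun sB' ht => ?_) <;> rw [hatGame_combine] at *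
  · rw [hatGame_valid_iff]
    refine fun x => ⟨fun hx => by simp [BWR.combine, BWR.loopAtRandom, hx], fun hx => ?_⟩
    simpa [BWR.combine, BWR.loopAtRandom, hx] using h.1 x
  · exact h.hatGame_payoff_le ht
  · exact h.le_hatGame_payoff ht
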